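/- A power series C(x) = B(x²) + x·A(x²) ∈ ℝ[[x]] is Hurwitz (its Hurwitz matrix (c_{2v-u})_{u,v∈ℤ} is totally positive) only if both A(x) and B(x) are AESW series (their Toeplitz matrices are totally positive). -/

import Mathlib

open scoped BigOperators

/-- The coefficient of `x^n` in a power series, for an integer `n`
(zero when `n < 0`). -/
noncomputable def intCoeff (A : PowerSeries ℝ) (n : ℤ) : ℝ :=
  if 0 ≤ n then PowerSeries.coeff n.toNat A else 0

/-- A `ℤ × ℤ` matrix is totally positive (TP) if every finite square
submatrix (rows and columns chosen in increasing order) has nonnegative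
determinant. -/
def TP (M : ℤ → ℤ → ℝ) : Prop :=
  ∀ (n : ℕ) (r c : Fin n → ℤ), StrictMono r → StrictMono c →
    0 ≤ (Matrix.of fun a b => M (r a) (c b)).det

/-- The interlacing matrix `Lace(A)` of a `p × q` matrix of formal power
series: the `(u,v)`-entry, for `u = p·u' + i` (`0 ≤ i < p`) and
`v = q·v' + j` (`0 ≤ j < q`), is the coefficient of `x^(v'-u')` in `A i j`. -/
noncomputable def lace {p q : ℕ} [NeZero p] [NeZero q]
    (A : Fin p → Fin q → PowerSeries ℝ) : ℤ → ℤ → ℝ := fun u v =>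
  intCoeff
    (A ⟨(u % (p : ℤ)).toNat, by
          have hp : (0 : ℤ) < (p : ℤ) := by
            exact_mod_cast Nat.pos_of_ne_zero (NeZero.ne p)
          have h1 := Int.emod_nonneg u hp.ne'
          have h2 := Int.emod_lt_of_pos u hp
          omega⟩
       ⟨(v % (q : ℤ)).toNat, by
          have hq : (0 : ℤ) < (q : ℤ) := by
            exact_mod_cast Nat.pos_of_ne_zero (NeZero.ne q)
          have h1 := Int.emod_nonneg v hq.ne'
          have h2 := Int.emod_lt_of_pos v hq
          omega⟩)
    (v / (q : ℤ) - u / (p : ℤ))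

/-- A matrix of formal power series is fully interlacing when its
interlacing matrix is totally positive. -/
def FullyInterlacing {p q : ℕ} [NeZero p] [NeZero q]
    (A : Fin p → Fin q → PowerSeries ℝ) : Prop :=
  TP (lace A)

/-- A sequence of power series viewed as a `p × 1` column matrix. -/
noncomputable def colMat {p : ℕ} (A : Fin p → PowerSeries ℝ) :
    Fin p → Fin 1 → PowerSeries ℝ := fun i _ => A i

/-- `A(x)` interlaces `B(x)`: the `2 × 1` column `(A, B)ᵀ` is fully
interlacing. -/
def SeriesInterlaces (A B : PowerSeries ℝ) : Prop :=
  FullyInterlacing (colMat ![A, B])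

/-- A power series is AESW (a Pólya frequency sequence) when its Toeplitz
matrix `(a_{v-u})` is totally positive. -/
def IsAESW (A : PowerSeries ℝ) : Prop :=
  TP fun u v => intCoeff A (v - u)

/-- The `k`-th Veronese `r`-section `S_k^{(r)} A(x) = ∑_{n ≥ 0} a_{k+rn} xⁿ`. -/
noncomputable def veronese (r k : ℕ) (A : PowerSeries ℝ) : PowerSeries ℝ :=
  PowerSeries.mk fun n => PowerSeries.coeff (k + r * n) A

/- The Toeplitz matrices of `A` and `B` are the submatrices of the Hurwitz matrix of `C` on the
odd, resp. even, rows: `c_{2v-(2u-1)} = a_{v-u}` and `c_{2v-2u} = b_{v-u}`. Total positivity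
passes to submatrices with increasing row and column indices. -/

theorem TP.comp_strictMono {M : ℤ → ℤ → ℝ} (hM : TP M) {f g : ℤ → ℤ} (hf : StrictMono f)
    (hg : StrictMono g) : TP fun u v => M (f u) (g v) :=
  fun n r c hr hc => hM n (f ∘ r) (g ∘ c) (hf.comp hr) (hg.comp hc)

theorem intCoeff_veronese {r k : ℕ} (hk : k < r) (A : PowerSeries ℝ) (n : ℤ) :
    intCoeff (veronese r k A) n = intCoeff A (k + r * n) := by
  rcases lt_or_ge n 0 with hn | hn
  · have hneg : (k : ℤ) + r * n < 0 := by nlinarith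
    simp only [intCoeff, if_neg hn.not_ge, if_neg hneg.not_ge]
  · lift n to ℕ using hn
    have hcast : (k : ℤ) + r * n = ((k + r * n : ℕ) : ℤ) := by push_cast; rfl
    simp only [intCoeff, hcast, Int.natCast_nonneg, if_true, Int.toNat_natCast, veronese,
      PowerSeries.coeff_mk]

theorem isAESW_veronese_of_tp_hurwitz {r : ℕ} {C : PowerSeries ℝ}
    (hHur : TP fun u v => intCoeff C (r * v - u)) {k : ℕ} (hk : k < r) :
    IsAESW (veronese r k C) := by
  have hrows : StrictMono fun u : ℤ => r * u - k := fun a b hab =>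
    Int.sub_lt_sub_right (Int.mul_lt_mul_of_pos_left hab (by omega)) k
  rw [IsAESW]
  convert hHur.comp_strictMono hrows strictMono_id using 3 with u v
  rw [intCoeff_veronese hk, id]
  congr 1
  ring

/-- If `C(x) = B(x²) + x·A(x²)` is Hurwitz, i.e. its Hurwitz matrix
`(c_{2v-u})` is totally positive, then both `A` and `B` are AESW series. -/
theorem stmt19 (A B C : PowerSeries ℝ)
    (hodd : ∀ n : ℕ, PowerSeries.coeff (2 * n + 1) C = PowerSeries.coeff n A)
    (heven : ∀ n : ℕ, PowerSeries.coeff (2 * n) C = PowerSeries.coeff n B)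
    (hHur : TP fun u v => intCoeff C (2 * v - u)) :
    IsAESW A ∧ IsAESW B := by
  have hA : A = veronese 2 1 C := PowerSeries.ext fun n => by
    rw [veronese, PowerSeries.coeff_mk, add_comm, hodd]
  have hB : B = veronese 2 0 C := PowerSeries.ext fun n => by
    rw [veronese, PowerSeries.coeff_mk, zero_add, heven]
  rw [hA, hB]
  exact ⟨isAESW_veronese_of_tp_hurwitz hHur one_lt_two,
    isAESW_veronese_of_tp_hurwitz hHur two_pos⟩
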